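/- Let p be a prime number and let P → Q → R → S be a sequence of homomorphisms of abelian groups that is exact at Q and at R. Suppose each of P, Q, R, S is a p-primary torsion abelian group of finite p-rank. Then |r_p(Q) − r_p(R)| ≤ 2·r_p(P) + r_p(S). -/

import Mathlib

/-!
Restricting `g` to `p`-torsion gives `|Q[p]| ≤ |(im f)[p]| · |R[p]|`, and likewise
`|R[p]| ≤ |(im g)[p]| · |S[p]|`. For any homomorphism `f : G → H`, the snake lemma for
multiplication by `p` on `0 → ker f → G → im f → 0` bounds `|(im f)[p]|` by
`|G[p]| · |ker f / p ker f|`. For a torsion group `|G / pG| ≤ |G[p]|`: this is an equality for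
finite groups, and every finite subset of `G / pG` comes from a finite subgroup. Since `ker f ≤ P`
and `ker g = im f` is a quotient of `P`, both `|ker f / p|` and `|ker g / p|` are at most `|P[p]|`,
so `r_p(Q) ≤ 2 r_p(P) + r_p(R)` and `r_p(R) ≤ r_p(Q) + r_p(P) + r_p(S)`.

Cardinalities are taken in `ℕ∞`, where all these bounds hold without finiteness assumptions.
-/

/-- The `p`-torsion subgroup `G[p] = {x : G | p • x = 0}` of an abelian group `G`. -/
def pTorsion (p : ℕ) (G : Type*) [AddCommGroup G] : AddSubgroup G where
  carrier := {x | p • x = 0}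
  zero_mem' := smul_zero p
  add_mem' := by
    intro a b ha hb
    simp only [Set.mem_setOf_eq, smul_add] at *
    rw [ha, hb, add_zero]
  neg_mem' := by
    intro a ha
    simp only [Set.mem_setOf_eq, smul_neg] at *
    rw [ha, neg_zero]

/-- The `p`-rank of an abelian group `G`: the dimension of `G[p]` as an
`𝔽_p = ZMod p` vector space. -/
noncomputable def pRank (p : ℕ) (G : Type*) [AddCommGroup G] : ℕ :=
  letI : Module (ZMod p) (pTorsion p G) :=
    AddCommGroup.zmodModule (fun x => Subtype.ext (by simp; exact x.2))
  Module.finrank (ZMod p) (pTorsion p G)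

open Function

theorem ENat.card_le_card_of_surjective {α β : Type*} {f : α → β} (hf : Surjective f) :
    ENat.card β ≤ ENat.card α :=
  ENat.card_le_card_of_injective (injective_surjInv hf)

theorem ENat.card_le_of_forall_finite_encard_le {α : Type*} {c : ℕ∞}
    (h : ∀ s : Set α, s.Finite → s.encard ≤ c) : ENat.card α ≤ c := by
  by_contra! hlt
  obtain ⟨n, rfl⟩ := ENat.ne_top_iff_exists.mp hlt.ne_top
  obtain ⟨s, -, hs⟩ := Set.exists_subset_encard_eq (s := Set.univ) (k := n + 1)
    (by rw [Set.encard_univ]; exact Order.add_one_le_of_lt hlt)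
  have hle := h s (Set.finite_of_encard_eq_coe hs)
  rw [hs] at hle
  norm_cast at hle
  omega

namespace AddMonoidHom

variable {G H Z : Type*} [AddGroup G] [AddGroup H] [AddGroup Z]

theorem enatCard_eq_card_ker_mul_card_range (φ : G →+ H) :
    ENat.card G = ENat.card φ.ker * ENat.card φ.range := by
  rw [ENat.card_congr φ.ker.addGroupEquivQuotientProdAddSubgroup, ENat.card_prod, mul_comm,
    ENat.card_congr (QuotientAddGroup.quotientKerEquivRange φ).toEquiv]

theorem enatCard_le_card_ker_inf_mul_card (φ : G →+ H) {A : AddSubgroup G} {B : AddSubgroup H}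
    (hAB : A ≤ B.comap φ) :
    ENat.card A ≤ ENat.card ↥(φ.ker ⊓ A) * ENat.card B := by
  set ψ : A →+ B := (φ.domRestrict A).codRestrict B fun x => hAB x.2
  have hker : ψ.ker = (φ.ker ⊓ A).addSubgroupOf A := by
    rw [AddSubgroup.inf_addSubgroupOf_right]
    exact ker_codRestrict _ _ _
  rw [ψ.enatCard_eq_card_ker_mul_card_range, hker,
    ENat.card_congr (AddSubgroup.addSubgroupOfEquivOfLe inf_le_right).toEquiv]
  gcongr
  exact ENat.card_le_card_of_injective Subtype.val_injective

theorem enatCard_range_le (F : G →+ H) (ψ : G →+ Z) {A : AddSubgroup G} (hF : F.ker ≤ ψ.ker)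
    (hA : ψ.ker ≤ A ⊔ F.ker) :
    ENat.card F.range ≤ ENat.card A * ENat.card Z := by
  set δ := QuotientAddGroup.lift F.ker ψ hF
  have hδ : δ.ker ≤ A.map (QuotientAddGroup.mk' F.ker) := by
    rw [QuotientAddGroup.ker_lift]
    refine (AddSubgroup.map_mono hA).trans ?_
    rw [AddSubgroup.map_sup, QuotientAddGroup.map_mk'_self, sup_bot_eq]
  rw [← ENat.card_congr (QuotientAddGroup.quotientKerEquivRange F).toEquiv,
    δ.enatCard_eq_card_ker_mul_card_range]
  gcongr
  · exact (ENat.card_le_card_of_injective (AddSubgroup.inclusion_injective hδ)).trans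
      (ENat.card_le_card_of_surjective (addSubgroupMap_surjective _ A))
  · exact ENat.card_le_card_of_injective Subtype.val_injective

end AddMonoidHom

theorem AddMonoidHom.card_quotient_range_eq_card_ker {G : Type*} [AddCommGroup G] [Finite G]
    (φ : G →+ G) : Nat.card (G ⧸ φ.range) = Nat.card φ.ker := by
  have h₁ : Nat.card φ.range * Nat.card (G ⧸ φ.range) = Nat.card G := φ.range.card_mul_index
  have h₂ : Nat.card φ.ker * Nat.card φ.range = Nat.card G := by
    rw [← AddSubgroup.index_ker]
    exact φ.ker.card_mul_index
  exact Nat.eq_of_mul_eq_mul_left (Nat.card_pos (α := φ.range)) (by rw [h₁, mul_comm, h₂])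

def pMultiples (p : ℕ) (G : Type*) [AddCommGroup G] : AddSubgroup G :=
  (nsmulAddMonoidHom p : G →+ G).range

section pTorsion

variable {p : ℕ} {G H : Type*} [AddCommGroup G] [AddCommGroup H]

theorem mem_pTorsion {x : G} : x ∈ pTorsion p G ↔ p • x = 0 := Iff.rfl

theorem pTorsion_eq_ker : pTorsion p G = (nsmulAddMonoidHom p : G →+ G).ker := rfl

theorem pTorsion_le_comap (φ : G →+ H) : pTorsion p G ≤ (pTorsion p H).comap φ := by
  intro x hx
  rw [AddSubgroup.mem_comap, mem_pTorsion, ← map_nsmul, mem_pTorsion.mp hx, map_zero]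

theorem pMultiples_le_comap (φ : G →+ H) : pMultiples p G ≤ (pMultiples p H).comap φ := by
  rintro _ ⟨x, rfl⟩
  exact ⟨φ x, (map_nsmul φ p x).symm⟩

theorem enatCard_pTorsion_le_of_injective {φ : G →+ H} (hφ : Injective φ) :
    ENat.card (pTorsion p G) ≤ ENat.card (pTorsion p H) :=
  ENat.card_le_card_of_injective (f := fun x => ⟨φ x, pTorsion_le_comap φ x.2⟩)
    fun _ _ hxy => Subtype.ext (hφ (congrArg Subtype.val hxy))

theorem enatCard_quotient_pMultiples_le_of_surjective {φ : G →+ H} (hφ : Surjective φ) :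
    ENat.card (H ⧸ pMultiples p H) ≤ ENat.card (G ⧸ pMultiples p G) :=
  ENat.card_le_card_of_surjective <| QuotientAddGroup.map_surjective_of_surjective _ _ φ
    ((QuotientAddGroup.mk'_surjective _).comp hφ) (pMultiples_le_comap φ)

theorem enatCard_quotient_pMultiples_eq [Finite G] :
    ENat.card (G ⧸ pMultiples p G) = ENat.card (pTorsion p G) := by
  rw [ENat.card_eq_coe_natCard, ENat.card_eq_coe_natCard, pMultiples, pTorsion_eq_ker,
    AddMonoidHom.card_quotient_range_eq_card_ker]

theorem enatCard_quotient_pMultiples_le (hG : IsAddTorsion G) :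
    ENat.card (G ⧸ pMultiples p G) ≤ ENat.card (pTorsion p G) := by
  refine ENat.card_le_of_forall_finite_encard_le fun s hs => ?_
  -- `s` lies in the image of `M / pM` for the finite subgroup `M` generated by lifts of `s`
  have : Finite s := hs
  set M := AddSubgroup.closure (Quotient.out '' s)
  have : Finite M := AddCommGroup.finite_of_fg_isAddTorsion M (hG.addSubgroup M)
  set ι := QuotientAddGroup.map _ _ M.subtype (pMultiples_le_comap (p := p) M.subtype)
  have hsι : s ⊆ Set.range ι := fun x hx =>
    ⟨QuotientAddGroup.mk ⟨x.out, AddSubgroup.subset_closure ⟨x, hx, rfl⟩⟩,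
      QuotientAddGroup.out_eq' x⟩
  calc s.encard ≤ (Set.range ι).encard := Set.encard_le_encard hsι
    _ ≤ ENat.card (M ⧸ pMultiples p M) :=
      ENat.card_le_card_of_surjective Set.rangeFactorization_surjective
    _ = ENat.card (pTorsion p M) := enatCard_quotient_pMultiples_eq
    _ ≤ ENat.card (pTorsion p G) := enatCard_pTorsion_le_of_injective M.subtype_injective

theorem enatCard_range_inf_pTorsion_le (f : G →+ H) :
    ENat.card ↥(f.range ⊓ pTorsion p H) ≤
      ENat.card (pTorsion p G) * ENat.card (f.ker ⧸ pMultiples p f.ker) := by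
  set D := (pTorsion p H).comap f
  set F := f.domRestrict D
  have hF : F.range = f.range ⊓ pTorsion p H := by
    rw [AddMonoidHom.domRestrict_range, AddSubgroup.map_comap_eq]
  -- `ψ d = [p • d]` induces the connecting map `(im f)[p] → ker f / p ker f` of the snake lemma
  set ψ : D →+ f.ker ⧸ pMultiples p f.ker := (QuotientAddGroup.mk' _).comp
    (((nsmulAddMonoidHom p).comp D.subtype).codRestrict f.ker fun d =>
      (map_nsmul f p (d : G)).trans d.2)
  have hFψ : F.ker ≤ ψ.ker := fun d hd =>
    (QuotientAddGroup.eq_zero_iff _).mpr ⟨⟨d, hd⟩, rfl⟩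
  have hψ : ψ.ker ≤ (pTorsion p G).addSubgroupOf D ⊔ F.ker := by
    intro d hd
    obtain ⟨k, hk⟩ := (QuotientAddGroup.eq_zero_iff _).mp hd
    have hkD : (k : G) ∈ D := by
      rw [AddSubgroup.mem_comap, f.mem_ker.mp k.2]
      exact zero_mem _
    refine AddSubgroup.mem_sup.mpr ⟨d - ⟨k, hkD⟩, ?_, ⟨k, hkD⟩, k.2, sub_add_cancel _ _⟩
    show p • ((d : G) - k) = 0
    rw [smul_sub, sub_eq_zero]
    exact (congrArg Subtype.val hk).symm
  rw [← hF, ← ENat.card_congr (AddSubgroup.addSubgroupOfEquivOfLe (pTorsion_le_comap f)).toEquiv]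
  exact F.enatCard_range_le ψ hFψ hψ

theorem enatCard_pTorsion_eq_pow (hp : p.Prime) [Finite (pTorsion p G)] :
    ENat.card (pTorsion p G) = (p ^ pRank p G : ℕ) := by
  have := Fact.mk hp
  let : Module (ZMod p) (pTorsion p G) := AddCommGroup.zmodModule fun x => Subtype.ext x.2
  have := Fintype.ofFinite (pTorsion p G)
  rw [ENat.card_eq_coe_fintype_card, pRank, Module.card_eq_pow_finrank (K := ZMod p), ZMod.card]

end pTorsion

section Exact

variable {p : ℕ} {P Q R S : Type*} [AddCommGroup P] [AddCommGroup Q] [AddCommGroup R]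
  [AddCommGroup S]

theorem enatCard_pTorsion_le_of_exact (hP : IsAddTorsion P) {f : P →+ Q} {g : Q →+ R}
    (hex : f.range = g.ker) :
    ENat.card (pTorsion p Q) ≤
      ENat.card (pTorsion p P) * ENat.card (pTorsion p P) * ENat.card (pTorsion p R) :=
  calc ENat.card (pTorsion p Q)
      ≤ ENat.card ↥(g.ker ⊓ pTorsion p Q) * ENat.card (pTorsion p R) :=
        g.enatCard_le_card_ker_inf_mul_card (pTorsion_le_comap g)
    _ ≤ ENat.card (pTorsion p P) * ENat.card (f.ker ⧸ pMultiples p f.ker) *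
        ENat.card (pTorsion p R) := by
        rw [← hex]
        gcongr
        exact enatCard_range_inf_pTorsion_le f
    _ ≤ _ := by
        gcongr
        exact (enatCard_quotient_pMultiples_le (hP.addSubgroup _)).trans
          (enatCard_pTorsion_le_of_injective f.ker.subtype_injective)

theorem enatCard_pTorsion_le_of_exact_of_exact (hP : IsAddTorsion P) {f : P →+ Q} {g : Q →+ R}
    {h : R →+ S} (hexQ : f.range = g.ker) (hexR : g.range = h.ker) :
    ENat.card (pTorsion p R) ≤
      ENat.card (pTorsion p Q) * ENat.card (pTorsion p P) * ENat.card (pTorsion p S) :=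
  calc ENat.card (pTorsion p R)
      ≤ ENat.card ↥(h.ker ⊓ pTorsion p R) * ENat.card (pTorsion p S) :=
        h.enatCard_le_card_ker_inf_mul_card (pTorsion_le_comap h)
    _ ≤ ENat.card (pTorsion p Q) * ENat.card (g.ker ⧸ pMultiples p g.ker) *
        ENat.card (pTorsion p S) := by
        rw [← hexR]
        gcongr
        exact enatCard_range_inf_pTorsion_le g
    _ ≤ _ := by
        rw [← hexQ]
        gcongr
        exact (enatCard_quotient_pMultiples_le_of_surjective f.rangeRestrict_surjective).trans
          (enatCard_quotient_pMultiples_le hP)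

end Exact

theorem pRank_sub_pRank_le_of_exact_general
    (p : ℕ) (hp : p.Prime)
    (P Q R S : Type*) [AddCommGroup P] [AddCommGroup Q] [AddCommGroup R] [AddCommGroup S]
    (hPtors : ∀ x : P, ∃ k : ℕ, p ^ k • x = 0)
    (hPfin : Finite (pTorsion p P)) (hQfin : Finite (pTorsion p Q))
    (hRfin : Finite (pTorsion p R)) (hSfin : Finite (pTorsion p S))
    (f : P →+ Q) (g : Q →+ R) (h : R →+ S)
    (hexQ : f.range = g.ker) (hexR : g.range = h.ker) :
    |(pRank p Q : ℤ) - (pRank p R : ℤ)| ≤ 2 * (pRank p P : ℤ) + (pRank p S : ℤ) := by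
  have hP : IsAddTorsion P := fun x =>
    have ⟨k, hk⟩ := hPtors x
    isOfFinAddOrder_iff_nsmul_eq_zero.mpr ⟨p ^ k, pow_pos hp.pos k, hk⟩
  have hQ := enatCard_pTorsion_le_of_exact (p := p) hP hexQ
  have hR := enatCard_pTorsion_le_of_exact_of_exact (p := p) hP hexQ hexR
  simp only [enatCard_pTorsion_eq_pow hp] at hQ hR
  norm_cast at hQ hR
  rw [← pow_add, ← pow_add, Nat.pow_le_pow_iff_right hp.one_lt] at hQ hR
  rw [abs_sub_le_iff]
  omega

/-- Lim–Murty, Lemma 3.2.  If `P → Q → R → S` is a sequence of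
homomorphisms of abelian groups, exact at `Q` and at `R`, all four groups being
`p`-primary torsion of finite `p`-rank, then `|r_p(Q) − r_p(R)| ≤ 2 r_p(P) + r_p(S)`. -/
theorem pRank_sub_pRank_le_of_exact
    (p : ℕ) (hp : p.Prime)
    (P Q R S : Type*) [AddCommGroup P] [AddCommGroup Q] [AddCommGroup R] [AddCommGroup S]
    (hPtors : ∀ x : P, ∃ k : ℕ, p ^ k • x = 0)
    (hQtors : ∀ x : Q, ∃ k : ℕ, p ^ k • x = 0)
    (hRtors : ∀ x : R, ∃ k : ℕ, p ^ k • x = 0)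
    (hStors : ∀ x : S, ∃ k : ℕ, p ^ k • x = 0)
    (hPfin : Finite (pTorsion p P)) (hQfin : Finite (pTorsion p Q))
    (hRfin : Finite (pTorsion p R)) (hSfin : Finite (pTorsion p S))
    (f : P →+ Q) (g : Q →+ R) (h : R →+ S)
    (hexQ : f.range = g.ker) (hexR : g.range = h.ker) :
    |(pRank p Q : ℤ) - (pRank p R : ℤ)| ≤ 2 * (pRank p P : ℤ) + (pRank p S : ℤ) :=
  pRank_sub_pRank_le_of_exact_general p hp P Q R S hPtors hPfin hQfin hRfin hSfin f g h hexQ hexR
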